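/- Let an observational semantics over types S, R, A with transition relation Tr, local extraction function E_l, local reconstruction function I_l, and initial states S₀ satisfy the local faithfulness condition: for all r, s, s' with Tr(r, s, s') and every actual trace T^w obtained by extraction along a generated virtual trace from an initial state ending in s, setting a = E_l(s, r, s', T^w), one has I_l(s, T^w ++ [a]) = (r, s'). Then the observational semantics is faithful: for every finite generated virtual trace T^v from an initial state, if T^w = E(T^v) is its extracted actual trace, then I(T^w) = T^v; equivalently, E(T^v) = T^w ∧ I(T^w) = T^v holds for every finite generated virtual trace T^v. -/

import Mathlib

variable {S R A : Type*}

/-- A generated virtual trace from a state: each event `(rᵢ, sᵢ)` is a transition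
from the previous state. -/
def IsGenTrace (Tr : R → S → S → Prop) : S → List (R × S) → Prop
  | _, [] => True
  | s, (r, s') :: evs => Tr r s s' ∧ IsGenTrace Tr s' evs

/-- The final state reached by a virtual trace. -/
def finalState : S → List (R × S) → S
  | s, [] => s
  | _, (_, s') :: evs => finalState s' evs

/-- Auxiliary extraction with an accumulator holding the already generated actual trace. -/
def extractAux (El : S → R → S → List A → A) : S → List A → List (R × S) → List A
  | _, _, [] => []
  | s, acc, (r, s') :: evs =>
      El s r s' acc :: extractAux El s' (acc ++ [El s r s' acc]) evs

/-- The extended extraction function `E`: `aᵢ = E_l(s_{i-1}, rᵢ, sᵢ, [a₁,…,a_{i-1}])`. -/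
def extract (El : S → R → S → List A → A) (s₀ : S) (evs : List (R × S)) : List A :=
  extractAux El s₀ [] evs

/-- Auxiliary reconstruction with an accumulator holding the already read actual trace. -/
def reconAux (Il : S → List A → R × S) : S → List A → List A → List (R × S)
  | _, _, [] => []
  | s, acc, a :: as =>
      Il s (acc ++ [a]) :: reconAux Il (Il s (acc ++ [a])).2 (acc ++ [a]) as

/-- The extended reconstruction function `I`: `(rᵢ, sᵢ) = I_l(s_{i-1}, [a₁,…,aᵢ])`. -/
def recon (Il : S → List A → R × S) (s₀ : S) (as : List A) : List (R × S) :=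
  reconAux Il s₀ [] as

/-- The local faithfulness condition. -/
def LocalFaithful (Tr : R → S → S → Prop) (El : S → R → S → List A → A)
    (Il : S → List A → R × S) (S₀ : Set S) : Prop :=
  ∀ r s s', Tr r s s' →
    ∀ s₀ ∈ S₀, ∀ evs : List (R × S), IsGenTrace Tr s₀ evs → finalState s₀ evs = s →
      Il s (extract El s₀ evs ++ [El s r s' (extract El s₀ evs)]) = (r, s')

section Traces

variable {Tr : R → S → S → Prop} {El : S → R → S → List A → A} {Il : S → List A → R × S}

theorem IsGenTrace.append {s : S} {l₁ l₂ : List (R × S)} (h₁ : IsGenTrace Tr s l₁)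
    (h₂ : IsGenTrace Tr (finalState s l₁) l₂) : IsGenTrace Tr s (l₁ ++ l₂) := by
  induction l₁ generalizing s with
  | nil => exact h₂
  | cons ev evs ih => exact ⟨h₁.1, ih h₁.2 h₂⟩

theorem finalState_append (s : S) (l₁ l₂ : List (R × S)) :
    finalState s (l₁ ++ l₂) = finalState (finalState s l₁) l₂ := by
  induction l₁ generalizing s with
  | nil => rfl
  | cons ev evs ih => exact ih ev.2

theorem extractAux_append (s : S) (acc : List A) (l₁ l₂ : List (R × S)) :
    extractAux El s acc (l₁ ++ l₂) =
      extractAux El s acc l₁ ++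
        extractAux El (finalState s l₁) (acc ++ extractAux El s acc l₁) l₂ := by
  induction l₁ generalizing s acc with
  | nil => simp [extractAux, finalState]
  | cons ev evs ih =>
    obtain ⟨r, s'⟩ := ev
    simp [extractAux, finalState, ih]

theorem extract_append_singleton (s₀ s' : S) (r : R) (pfx : List (R × S)) :
    extract El s₀ (pfx ++ [(r, s')]) =
      extract El s₀ pfx ++ [El (finalState s₀ pfx) r s' (extract El s₀ pfx)] := by
  simp [extract, extractAux_append, extractAux]

/-- Stated after an arbitrary generated prefix `pfx`, rather than for an arbitrary accumulator,
because `LocalFaithful` only speaks about accumulators that are extracted prefixes. -/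
theorem reconAux_extractAux_of_localFaithful {S₀ : Set S} (hLF : LocalFaithful Tr El Il S₀)
    {s₀ : S} (hs₀ : s₀ ∈ S₀) (evs : List (R × S)) :
    ∀ pfx : List (R × S), IsGenTrace Tr s₀ pfx → IsGenTrace Tr (finalState s₀ pfx) evs →
      reconAux Il (finalState s₀ pfx) (extract El s₀ pfx)
        (extractAux El (finalState s₀ pfx) (extract El s₀ pfx) evs) = evs := by
  induction evs with
  | nil => intro _ _ _; rfl
  | cons ev evs ih =>
    obtain ⟨r, s'⟩ := ev
    intro pfx hpfx ⟨hTr, hevs⟩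
    have hstep := hLF r _ s' hTr s₀ hs₀ pfx hpfx rfl
    have hfinal : finalState s₀ (pfx ++ [(r, s')]) = s' := finalState_append s₀ pfx _
    have hrest := ih (pfx ++ [(r, s')]) (hpfx.append ⟨hTr, trivial⟩) (by rwa [hfinal])
    rw [hfinal, extract_append_singleton] at hrest
    simp only [extractAux, reconAux, hstep, hrest]

theorem recon_extract_of_localFaithful {S₀ : Set S} (hLF : LocalFaithful Tr El Il S₀)
    {s₀ : S} (hs₀ : s₀ ∈ S₀) {evs : List (R × S)} (hgen : IsGenTrace Tr s₀ evs) :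
    recon Il s₀ (extract El s₀ evs) = evs :=
  reconAux_extractAux_of_localFaithful hLF hs₀ evs [] trivial hgen

end Traces

theorem faithfulness_of_localFaithful_general
    (Tr : R → S → S → Prop)
    (El : S → R → S → List A → A) (Il : S → List A → R × S) (S₀ : Set S)
    (hLF : LocalFaithful Tr El Il S₀) :
    ∀ s₀ ∈ S₀, ∀ evs : List (R × S), IsGenTrace Tr s₀ evs →
      ∀ Tw : List A, extract El s₀ evs = Tw →
        extract El s₀ evs = Tw ∧ recon Il s₀ Tw = evs := by
  rintro s₀ hs₀ evs hgen Tw rfl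
  exact ⟨rfl, recon_extract_of_localFaithful hLF hs₀ hgen⟩

/-- If the observational semantics satisfies the local faithfulness
condition, then it is faithful: for every finite generated virtual trace `T^v` from an
initial state, if `T^w = E(T^v)` then `I(T^w) = T^v` (equivalently,
`E(T^v) = T^w ∧ I(T^w) = T^v`). -/
theorem faithfulness_of_localFaithful
    (Tr : R → S → S → Prop)
    (hFun : ∀ r s s' s'', Tr r s s' → Tr r s s'' → s' = s'')
    (El : S → R → S → List A → A) (Il : S → List A → R × S) (S₀ : Set S)
    (hLF : LocalFaithful Tr El Il S₀) :
    ∀ s₀ ∈ S₀, ∀ evs : List (R × S), IsGenTrace Tr s₀ evs →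
      ∀ Tw : List A, extract El s₀ evs = Tw →
        extract El s₀ evs = Tw ∧ recon Il s₀ Tw = evs :=
  faithfulness_of_localFaithful_general Tr El Il S₀ hLF
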